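/- arXiv:0706.4473 — 4 statements merged into one kernel-verified Lean document; each statement's English description precedes it below -/
import Mathlib

section
/- Let ζ be a nonzero purely imaginary quaternion. Then for every quaternion ξ the element ξ * ζ + ζ * (star ξ) is purely imaginary, and the ℝ-linear map ℍ → Im ℍ, ξ ↦ ξ * ζ + ζ * (star ξ), is surjective onto the space of purely imaginary quaternions. -/
/-- For a nonzero purely imaginary quaternion `ζ`, the element `ξ ζ + ζ ξ̄` is purely
imaginary for every quaternion `ξ`, and the (ℝ-linear) map `ξ ↦ ξ ζ + ζ ξ̄` is
surjective onto the space of purely imaginary quaternions.  This is the differential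
at `x = 1` of the conjugation map `x ↦ x ζ x̄`, so every nonzero imaginary quaternion
is a regular value of the `ℍ*`-equivariant momentum map. -/
theorem differential_of_conjugation_surjective
    (ζ : Quaternion ℝ) (hre : ζ.re = 0) (hne : ζ ≠ 0) :
    (∀ ξ : Quaternion ℝ, (ξ * ζ + ζ * star ξ).re = 0) ∧
      (∀ η : Quaternion ℝ, η.re = 0 → ∃ ξ : Quaternion ℝ, ξ * ζ + ζ * star ξ = η) := by
  constructor
  · intro ξ
    simp [Quaternion.re_add, Quaternion.re_mul, hre]
    ring
  · intro η hη
    have hζ : star ζ = -ζ := by ext <;> simp [hre]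
    have hη' : star η = -η := by ext <;> simp [hη]
    set n : ℝ := Quaternion.normSq ζ with hn
    have hn0 : n ≠ 0 := Quaternion.normSq_ne_zero.mpr hne
    have hsq : ζ * ζ = -((n : ℝ) : Quaternion ℝ) := by
      have h := Quaternion.star_mul_self ζ
      rw [hζ, neg_mul] at h
      exact neg_eq_iff_eq_neg.mp h
    refine ⟨(2 * n)⁻¹ • (-(η * ζ)), ?_⟩
    have hst : star ((2 * n)⁻¹ • (-(η * ζ))) = (2 * n)⁻¹ • (-(ζ * η)) := by
      rw [Quaternion.star_smul, star_neg, star_mul, hζ, hη']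
      simp
    rw [hst, smul_mul_assoc, mul_smul_comm, ← smul_add]
    have key : -(η * ζ) * ζ + ζ * -(ζ * η) = (2 * n) • η := by
      rw [neg_mul, mul_assoc, hsq, mul_neg, neg_neg, mul_neg, ← mul_assoc, hsq,
        neg_mul, neg_neg, Quaternion.mul_coe_eq_smul, Quaternion.coe_mul_eq_smul,
        ← add_smul]
      ring_nf
    rw [key, smul_smul, inv_mul_cancel₀ (by positivity : (2:ℝ) * n ≠ 0), one_smul]
end

section
/- Let q be a quaternion. Then the quaternion α * q * (star β) − β * q * (star α) is real (has vanishing imaginary part) for all quaternions α, β if and only if Re q = 0. -/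
/-!
Write `q = re q + im q`. For pure imaginary `v`, `star (α v β̄) = -(β v ᾱ)`, so `im q` contributes
`Y + star Y` with `Y = α (im q) β̄`, which is real; `re q` contributes `re q • (Z - star Z)` with
`Z = α β̄`, whose imaginary part is `2 re q • im Z`. Taking `α = i`, `β = 1` gives `im Z ≠ 0`.
-/

namespace Quaternion

variable {R : Type*} [CommRing R]

theorem im_mul_mul_star_sub_mul_mul_star (α q β : ℍ[R]) :
    (α * q * star β - β * q * star α).im = (2 * q.re) • (α * star β).im := by
  have hstar : star (α * q.im * star β) = -(β * q.im * star α) := by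
    simp [star_mul, mul_assoc]
  have hsplit : α * q * star β - β * q * star α =
      q.re • (α * star β - star (α * star β)) + (α * q.im * star β + star (α * q.im * star β)) := by
    conv_lhs => rw [← re_add_im q]
    rw [hstar, star_mul, star_star]
    simp only [mul_add, add_mul, mul_coe_eq_smul, smul_mul_assoc, smul_sub]
    abel
  rw [hsplit, self_add_star', im_add, im_smul, im_sub, im_star, im_coe]
  module

theorem forall_im_mul_mul_star_sub_mul_mul_star_eq_zero_iff (q : ℍ[R]) :
    (∀ α β : ℍ[R], (α * q * star β - β * q * star α).im = 0) ↔ 2 * q.re = 0 := by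
  simp only [im_mul_mul_star_sub_mul_mul_star]
  refine ⟨fun h => ?_, fun h α β => by rw [h, zero_smul]⟩
  -- `e` is kept abstract: `simp` cannot reduce `⟨0, 1, 0, 0⟩ * 1`, whose type it does not see as `ℍ[R]`.
  obtain ⟨e, he⟩ : ∃ e : ℍ[R], e.imI = 1 := ⟨⟨0, 1, 0, 0⟩, rfl⟩
  simpa [he] using congrArg QuaternionAlgebra.imI (h e 1)

end Quaternion

/-- For a quaternion `q`, the quaternion `α q β̄ − β q ᾱ` is real (has vanishing
imaginary part) for all quaternions `α, β` if and only if `Re q = 0`.  This is the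
algebraic core of the equivalence of `Im(dx ∧ θ ∧ dx̄) = 0` with `Re θ = 0`. -/
theorem real_for_all_conj_iff_re_eq_zero (q : Quaternion ℝ) :
    (∀ α β : Quaternion ℝ, (α * q * star β - β * q * star α).im = 0) ↔ q.re = 0 :=
  (Quaternion.forall_im_mul_mul_star_sub_mul_mul_star_eq_zero_iff q).trans
    (mul_eq_zero.trans (or_iff_right two_ne_zero))
end

section
/- For all quaternions α, β, x and all real numbers a, v, w, E with v > 0, w ≥ 0 and E ≥ 0, one has (4v + w)·‖α‖² − 4a·Re((star x) * α * i) − 2w·Re((star x) * α * i * β) + ‖x‖²·(w·‖β‖² + E + a²/v) = ‖2√v·(α*i) − (a/√v)·x‖² + w·‖α*i − x*(star β)‖² + E·‖x‖², and in particular this expression is nonnegative. -/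
/-- The standard imaginary unit `i` of the real quaternions. -/
def Quaternion.I : Quaternion ℝ := ⟨0, 1, 0, 0⟩

/-!
Read `ℍ` as the Euclidean space `ℝ⁴` with `⟪p, q⟫ = Re (p q̄)`. Since `Re` is invariant under cyclic
permutations, the two cross terms are `⟪α i, x⟫` and `⟪α i, x β̄⟫`, and since `‖α i‖ = ‖α‖` and
`‖x β̄‖ = ‖x‖ ‖β‖`, expanding the two squared norms on the right gives the left-hand side term by
term. Only `‖i‖ = 1` is used, so `i` may be any unit quaternion.
-/

open Quaternion RealInnerProductSpace

theorem norm_smul_sub_smul_sq {F : Type*} [NormedAddCommGroup F] [InnerProductSpace ℝ F]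
    (s t : ℝ) (p q : F) :
    ‖s • p - t • q‖ ^ 2 = s ^ 2 * ‖p‖ ^ 2 - 2 * (s * t) * ⟪p, q⟫ + t ^ 2 * ‖q‖ ^ 2 := by
  rw [norm_sub_sq_real, norm_smul, norm_smul, inner_smul_left, inner_smul_right,
    Real.norm_eq_abs, Real.norm_eq_abs, mul_pow, mul_pow, sq_abs, sq_abs]
  simp only [conj_trivial]
  ring

namespace Quaternion

theorem re_mul_comm (p q : ℍ[ℝ]) : (p * q).re = (q * p).re := by
  simp only [re_mul]
  ring

theorem re_star_mul_eq_inner (x y : ℍ[ℝ]) : (star x * y).re = ⟪y, x⟫ := by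
  rw [inner_def, re_mul_comm]

theorem inner_mul_left_eq_inner_mul_star (a b c : ℍ[ℝ]) : ⟪a * b, c⟫ = ⟪a, c * star b⟫ := by
  rw [inner_def, inner_def, star_mul, star_star, mul_assoc]

theorem norm_I : ‖Quaternion.I‖ = 1 := by
  rw [norm_eq_sqrt_real_inner, inner_self, normSq_def', Real.sqrt_eq_one]
  simp [Quaternion.I]

theorem sum_of_squares_identity_of_norm_eq_one (α β x u : ℍ[ℝ]) (hu : ‖u‖ = 1)
    (a v w E : ℝ) (hv : 0 < v) :
    (4 * v + w) * ‖α‖ ^ 2 - 4 * a * (star x * α * u).re - 2 * w * (star x * α * u * β).re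
        + ‖x‖ ^ 2 * (w * ‖β‖ ^ 2 + E + a ^ 2 / v)
      = ‖(2 * Real.sqrt v) • (α * u) - (a / Real.sqrt v) • x‖ ^ 2
        + w * ‖α * u - x * star β‖ ^ 2 + E * ‖x‖ ^ 2 := by
  have hαu : ‖α * u‖ = ‖α‖ := by rw [norm_mul, hu, mul_one]
  have hxβ : ‖x * star β‖ = ‖x‖ * ‖β‖ := by rw [norm_mul, norm_star]
  have hcross : (star x * α * u * β).re = ⟪α * u, x * star β⟫ := by
    rw [mul_assoc, mul_assoc, re_star_mul_eq_inner, ← mul_assoc, inner_mul_left_eq_inner_mul_star]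
  rw [hcross, mul_assoc (star x), re_star_mul_eq_inner, norm_smul_sub_smul_sq, norm_sub_sq_real,
    hαu, hxβ, mul_pow, div_pow, Real.sq_sqrt hv.le]
  field_simp
  ring

end Quaternion

/-- The sum-of-squares identity showing that the symmetric tensor
`f*g = (4v+w) Re dx⊗dx̄ − Re(x̄ dx i ⊙ (2ξ+η)) + |x|²(g̃ + v⁻¹ξ²)` is nonnegative
at every point of `ℍ* × P` (Theorem `Thm_HKmanifold` of the paper). -/
theorem sum_of_squares_identity (α β x : Quaternion ℝ) (a v w E : ℝ)
    (hv : 0 < v) (hw : 0 ≤ w) (hE : 0 ≤ E) :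
    (4 * v + w) * ‖α‖ ^ 2 - 4 * a * (star x * α * Quaternion.I).re
        - 2 * w * (star x * α * Quaternion.I * β).re
        + ‖x‖ ^ 2 * (w * ‖β‖ ^ 2 + E + a ^ 2 / v)
      = ‖(2 * Real.sqrt v) • (α * Quaternion.I) - (a / Real.sqrt v) • x‖ ^ 2
        + w * ‖α * Quaternion.I - x * star β‖ ^ 2 + E * ‖x‖ ^ 2 ∧
    0 ≤ (4 * v + w) * ‖α‖ ^ 2 - 4 * a * (star x * α * Quaternion.I).re
        - 2 * w * (star x * α * Quaternion.I * β).re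
        + ‖x‖ ^ 2 * (w * ‖β‖ ^ 2 + E + a ^ 2 / v) := by
  have key := sum_of_squares_identity_of_norm_eq_one α β x _ norm_I a v w E hv
  exact ⟨key, key ▸ by positivity⟩
end

section
/- Let X be the set of pairs (B, C), with B an n×k complex matrix and C a k×n complex matrix, satisfying Bᴴ·B − C·Cᴴ = 1 and C·B = 0, and let Y be the set of pairs (B, C) satisfying rank B = k and C·B = 0. Consider on X the equivalence relation (B₁,C₁) ∼ (B₂,C₂) iff there exists a unitary u ∈ U(k) with B₂ = B₁·u and C₂ = u⁻¹·C₁, and on Y the equivalence relation given by the analogous condition with u replaced by an arbitrary invertible g ∈ GL_k(ℂ). Then X ⊆ Y, and the inclusion X ↪ Y induces a bijection between the quotient X/U(k) and the quotient Y/GL_k(ℂ). -/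
open Matrix

/-- Pairs `(B, C)` of an `n×k` and a `k×n` complex matrix. -/
abbrev MatPair (n k : ℕ) := Matrix (Fin n) (Fin k) ℂ × Matrix (Fin k) (Fin n) ℂ

/-- The level set `X = {(B,C) : Bᴴ B − C Cᴴ = 1, C B = 0}` of the hyperKähler
momentum map. -/
def levelSet (n k : ℕ) : Set (MatPair n k) :=
  {p | p.1ᴴ * p.1 - p.2 * p.2ᴴ = 1 ∧ p.2 * p.1 = 0}

/-- The set `Y = {(B,C) : rk B = k, C B = 0}`. -/
def fullRankSet (n k : ℕ) : Set (MatPair n k) :=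
  {p | p.1.rank = k ∧ p.2 * p.1 = 0}

/-- The equivalence on `X`: `(B₁,C₁) ∼ (B₂,C₂)` iff there is a unitary `u`
with `B₂ = B₁ u` and `C₂ = u⁻¹ C₁`. -/
def unitaryRel (n k : ℕ) (p q : levelSet n k) : Prop :=
  ∃ u : Matrix (Fin k) (Fin k) ℂ, uᴴ * u = 1 ∧
    (q : MatPair n k).1 = (p : MatPair n k).1 * u ∧
    (q : MatPair n k).2 = u⁻¹ * (p : MatPair n k).2

/-- The equivalence on `Y`: `(B₁,C₁) ∼ (B₂,C₂)` iff there is an invertible `g`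
with `B₂ = B₁ g` and `C₂ = g⁻¹ C₁`. -/
def glRel (n k : ℕ) (p q : fullRankSet n k) : Prop :=
  ∃ g : Matrix (Fin k) (Fin k) ℂ, IsUnit g ∧
    (q : MatPair n k).1 = (p : MatPair n k).1 * g ∧
    (q : MatPair n k).2 = g⁻¹ * (p : MatPair n k).2

/-!
For `(B, C) ∈ Y` put `P = Bᴴ B`, which is positive definite, and `Q = C Cᴴ ≥ 0`. For invertible
`g`, the pair `(B g, g⁻¹ C)` lies in `X` iff `h = g gᴴ` solves `h P h - h = Q`. Conjugating by
`S = √P`, this becomes `m² - m = S Q S` for `m = S h S > 0`, and a strictly positive solution of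
`m² - m = r ≥ 0` has spectrum in `[1, ∞)`, so it is `(1 + √(1 + 4 r)) / 2` and nothing else.
Existence makes every `GLₖ`-orbit meet `X`; uniqueness, applied to a point of `X` where `h = 1`
is already a solution, forces `g gᴴ = 1`, so two points of `X` in the same `GLₖ`-orbit are
already in the same `U(k)`-orbit.
-/

theorem Quot.map_bijective {α β : Type*} {r : α → α → Prop} {s : β → β → Prop}
    (hs : Equivalence s) (f : α → β) (hf : ∀ a b, r a b ↔ s (f a) (f b))
    (hsurj : ∀ b, ∃ a, s (f a) b) :
    Function.Bijective (Quot.map f fun a b ↦ (hf a b).mp) := by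
  constructor
  · rintro ⟨a⟩ ⟨b⟩ h
    exact Quot.sound ((hf a b).mpr (hs.eqvGen_iff.mp (Quot.eqvGen_exact h)))
  · rintro ⟨b⟩
    obtain ⟨a, hab⟩ := hsurj b
    exact ⟨Quot.mk r a, Quot.sound hab⟩

theorem Matrix.isUnit_of_rank_eq_card {m K : Type*} [Fintype m] [DecidableEq m] [Field K]
    {M : Matrix m m K} (h : M.rank = Fintype.card m) : IsUnit M := by
  rw [← mulVec_surjective_iff_isUnit, ← coe_mulVecLin, ← LinearMap.range_eq_top]
  apply Submodule.eq_top_of_finrank_eq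
  rw [← Matrix.rank, h, Module.finrank_fintype_fun_eq_card]

theorem add_self_sub_one_sq {R : Type*} [Ring R] (c : R) :
    (c + c - 1) ^ 2 = 4 • (c * c - c) + 1 := by
  noncomm_ring

theorem conj_mul_self_sub_conj {R : Type*} [Ring R] (S h : R) :
    S * h * S * (S * h * S) - S * h * S = S * (h * (S * S) * h - h) * S := by
  noncomm_ring

theorem star_conj_sub_inverse_conj_eq_one_iff {R : Type*} [Ring R] [StarRing R] {g : R}
    (hg : IsUnit g) (P Q : R) :
    star g * P * g - Ring.inverse g * Q * star (Ring.inverse g) = 1 ↔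
      g * star g * P * (g * star g) - g * star g = Q := by
  lift g to Rˣ using hg
  have hstar : star (↑g⁻¹ : R) * star (g : R) = 1 := by rw [← star_mul, g.mul_inv, star_one]
  have hconj : ↑g * (star (g : R) * P * g - ↑g⁻¹ * Q * star (↑g⁻¹ : R)) * star (g : R) =
      g * star (g : R) * P * (g * star (g : R)) - Q := by
    simp only [mul_sub, sub_mul, mul_assoc, hstar, g.mul_inv_cancel_left, mul_one]
  rw [Ring.inverse_unit, ← g.isUnit.mul_right_injective.eq_iff,
    ← g.isUnit.star.mul_left_injective.eq_iff]
  simp only [hconj, mul_one, sub_eq_iff_comm]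

section CStarAlgebra

variable {A : Type*} [CStarAlgebra A] [PartialOrder A] [StarOrderedRing A]

theorem one_le_of_isStrictlyPositive_of_nonneg_mul_self_sub {m : A}
    (hm : IsStrictlyPositive m) (h : 0 ≤ m * m - m) : 1 ≤ m := by
  have hsa : IsSelfAdjoint m := hm.isSelfAdjoint
  rw [← cfc_id' ℝ m, ← cfc_mul .., ← cfc_sub .., cfc_nonneg_iff (fun x : ℝ ↦ x * x - x) m] at h
  rw [CFC.one_le_iff (R := ℝ) m]
  intro x hx
  nlinarith [h x hx, hm.spectrum_pos hx]

theorem eq_of_one_le_of_mul_self_sub_eq {a b : A} (ha : 1 ≤ a) (hb : 1 ≤ b)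
    (h : a * a - a = b * b - b) : a = b := by
  have hnonneg {c : A} (hc : 1 ≤ c) : 0 ≤ c + c - 1 := by
    rw [add_sub_assoc]
    exact add_nonneg (zero_le_one.trans hc) (sub_nonneg.mpr hc)
  have h2 : a + a = b + b := by
    rw [← sub_left_inj (a := (1 : A)), ← CFC.sqrt_sq _ (hnonneg ha), ← CFC.sqrt_sq _ (hnonneg hb),
      add_self_sub_one_sq, add_self_sub_one_sq, h]
  simpa only [← two_smul ℝ, smul_right_inj (two_ne_zero (α := ℝ))] using h2

theorem exists_one_le_mul_self_sub_eq {r : A} (hr : 0 ≤ r) :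
    ∃ m : A, 1 ≤ m ∧ m * m - m = r := by
  set s := CFC.sqrt (4 • r + 1)
  have hs : 1 ≤ s := by
    rw [← CFC.sqrt_one (A := A)]
    exact CFC.sqrt_le_sqrt _ _ (le_add_of_nonneg_left (nsmul_nonneg hr 4))
  have hdouble : (2⁻¹ : ℝ) • (1 + s) + (2⁻¹ : ℝ) • (1 + s) = 1 + s := by
    rw [← add_smul]; norm_num
  refine ⟨(2⁻¹ : ℝ) • (1 + s), ?_, ?_⟩
  · rw [← smul_le_smul_iff_of_pos_left (zero_lt_two' ℝ), smul_smul,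
      mul_inv_cancel₀ two_ne_zero, one_smul, two_smul]
    exact add_le_add le_rfl hs
  · have h4 := add_self_sub_one_sq ((2⁻¹ : ℝ) • (1 + s))
    rw [hdouble, add_sub_cancel_left, sq,
      CFC.sqrt_mul_sqrt_self _ (add_nonneg (nsmul_nonneg hr 4) zero_le_one), add_left_inj] at h4
    simpa only [← Nat.cast_smul_eq_nsmul ℝ, Nat.cast_ofNat,
      smul_right_inj (four_ne_zero (α := ℝ))] using h4.symm

theorem exists_isStrictlyPositive_mul_mul_sub_eq {P Q : A} (hP : IsStrictlyPositive P)
    (hQ : 0 ≤ Q) : ∃ h : A, IsStrictlyPositive h ∧ h * P * h - h = Q := by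
  obtain ⟨S, hS, rfl⟩ :=
    CStarAlgebra.isStrictlyPositive_iff_exists_isStrictlyPositive_and_eq_mul_self.mp hP
  obtain ⟨m, hm, hmQ⟩ := exists_one_le_mul_self_sub_eq (conjugate_nonneg_of_nonneg hQ hS.nonneg)
  have hT : IsStrictlyPositive (Ring.inverse S) := hS.ringInverse
  refine ⟨Ring.inverse S * m * Ring.inverse S, .conjugate_of_isUnit_of_isSelfAdjoint _ _
    hT.isUnit hT.isSelfAdjoint (isStrictlyPositive_one.of_le hm), ?_⟩
  have hSmS : S * (Ring.inverse S * m * Ring.inverse S) * S = m := by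
    simp only [← mul_assoc, Ring.mul_inverse_cancel S hS.isUnit, one_mul]
    simp only [mul_assoc, Ring.inverse_mul_cancel S hS.isUnit, mul_one]
  apply hS.isUnit.mul_left_cancel
  apply hS.isUnit.mul_right_cancel
  rw [← conj_mul_self_sub_conj, hSmS, hmQ]

theorem eq_of_mul_mul_sub_eq {P Q h₁ h₂ : A} (hP : IsStrictlyPositive P) (hQ : 0 ≤ Q)
    (hh₁ : IsStrictlyPositive h₁) (hh₂ : IsStrictlyPositive h₂)
    (e₁ : h₁ * P * h₁ - h₁ = Q) (e₂ : h₂ * P * h₂ - h₂ = Q) : h₁ = h₂ := by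
  obtain ⟨S, hS, rfl⟩ :=
    CStarAlgebra.isStrictlyPositive_iff_exists_isStrictlyPositive_and_eq_mul_self.mp hP
  have one_le {h : A} (hh : IsStrictlyPositive h) (e : h * (S * S) * h - h = Q) :
      1 ≤ S * h * S := by
    refine one_le_of_isStrictlyPositive_of_nonneg_mul_self_sub
      (.conjugate_of_isUnit_of_isSelfAdjoint _ _ hS.isUnit hS.isSelfAdjoint hh) ?_
    rw [conj_mul_self_sub_conj, e]
    exact conjugate_nonneg_of_nonneg hQ hS.nonneg
  have hconj : S * h₁ * S = S * h₂ * S := eq_of_one_le_of_mul_self_sub_eq (one_le hh₁ e₁)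
    (one_le hh₂ e₂) (by rw [conj_mul_self_sub_conj, conj_mul_self_sub_conj, e₁, e₂])
  exact hS.isUnit.mul_left_cancel (hS.isUnit.mul_right_cancel hconj)

theorem exists_star_conj_sub_inverse_conj_eq_one {P Q : A} (hP : IsStrictlyPositive P)
    (hQ : 0 ≤ Q) :
    ∃ g : A, IsUnit g ∧ star g * P * g - Ring.inverse g * Q * star (Ring.inverse g) = 1 := by
  obtain ⟨h, hh, e⟩ := exists_isStrictlyPositive_mul_mul_sub_eq hP hQ
  obtain ⟨g, hg, rfl⟩ := CStarAlgebra.isStrictlyPositive_iff_eq_mul_star_self.mp hh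
  exact ⟨g, hg, (star_conj_sub_inverse_conj_eq_one_iff hg P Q).mpr e⟩

theorem star_mul_self_eq_one_of_star_conj_sub_inverse_conj_eq_one {P Q g : A} (hQ : 0 ≤ Q)
    (hPQ : P - Q = 1) (hg : IsUnit g)
    (hPQg : star g * P * g - Ring.inverse g * Q * star (Ring.inverse g) = 1) :
    star g * g = 1 := by
  have hP : IsStrictlyPositive P := by
    rw [sub_eq_iff_eq_add.mp hPQ]
    exact isStrictlyPositive_one.add_nonneg hQ
  have hgg : g * star g = 1 :=
    eq_of_mul_mul_sub_eq hP hQ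
      (CStarAlgebra.isStrictlyPositive_iff_eq_mul_star_self.mpr ⟨g, hg, rfl⟩)
      isStrictlyPositive_one ((star_conj_sub_inverse_conj_eq_one_iff hg P Q).mp hPQg)
      (by rw [one_mul, mul_one, ← hPQ, sub_sub_cancel])
  lift g to Aˣ using hg
  rw [← Units.inv_eq_of_mul_eq_one_right hgg, g.inv_mul]

end CStarAlgebra

theorem glRel_equivalence (n k : ℕ) : Equivalence (glRel n k) where
  refl _ := ⟨1, isUnit_one, (Matrix.mul_one _).symm, by rw [inv_one, Matrix.one_mul]⟩
  symm := by
    rintro p q ⟨g, hg, h1, h2⟩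
    have hdet := (isUnit_iff_isUnit_det g).mp hg
    refine ⟨g⁻¹, isUnit_nonsing_inv_iff.mpr hg, ?_, ?_⟩
    · rw [h1, mul_nonsing_inv_cancel_right _ _ hdet]
    · rw [h2, nonsing_inv_nonsing_inv _ hdet, mul_nonsing_inv_cancel_left _ _ hdet]
  trans := by
    rintro p q r ⟨g, hg, h1, h2⟩ ⟨g', hg', h1', h2'⟩
    refine ⟨g * g', hg.mul hg', ?_, ?_⟩
    · rw [h1', h1, Matrix.mul_assoc]
    · rw [h2', h2, Matrix.mul_inv_rev, Matrix.mul_assoc]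

section LevelSet

open scoped ComplexOrder MatrixOrder Matrix.Norms.L2Operator

variable {n k : ℕ}

theorem levelSet_subset_fullRankSet : levelSet n k ⊆ fullRankSet n k := by
  rintro ⟨B, C⟩ ⟨hBC, hCB⟩
  have hP : (Bᴴ * B).PosDef := by
    rw [sub_eq_iff_eq_add.mp hBC]
    exact PosDef.one.add_posSemidef (posSemidef_self_mul_conjTranspose C)
  refine ⟨?_, hCB⟩
  rw [← rank_conjTranspose_mul_self, rank_of_isUnit _ hP.isUnit, Fintype.card_fin]

theorem mul_mem_levelSet_iff {p : MatPair n k} (hp : p.2 * p.1 = 0)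
    (g : Matrix (Fin k) (Fin k) ℂ) :
    (p.1 * g, g⁻¹ * p.2) ∈ levelSet n k ↔
      star g * (p.1ᴴ * p.1) * g - Ring.inverse g * (p.2 * p.2ᴴ) * star (Ring.inverse g) = 1 := by
  have hCB : g⁻¹ * p.2 * (p.1 * g) = 0 := by
    rw [Matrix.mul_assoc, ← Matrix.mul_assoc p.2, hp, Matrix.zero_mul, Matrix.mul_zero]
  simp only [levelSet, Set.mem_ofPred_eq, hCB, and_true]
  simp only [conjTranspose_mul, star_eq_conjTranspose, nonsing_inv_eq_ringInverse,
    Matrix.mul_assoc]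

theorem exists_mul_mem_levelSet {p : MatPair n k} (hp : p ∈ fullRankSet n k) :
    ∃ g : Matrix (Fin k) (Fin k) ℂ, IsUnit g ∧ (p.1 * g, g⁻¹ * p.2) ∈ levelSet n k := by
  have hP : (p.1ᴴ * p.1).PosDef := (posSemidef_conjTranspose_mul_self p.1).posDef_iff_isUnit.mpr
    (isUnit_of_rank_eq_card (by rw [rank_conjTranspose_mul_self, hp.1, Fintype.card_fin]))
  obtain ⟨g, hg, hPQg⟩ := exists_star_conj_sub_inverse_conj_eq_one hP.isStrictlyPositive
    (posSemidef_self_mul_conjTranspose p.2).nonneg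
  exact ⟨g, hg, (mul_mem_levelSet_iff hp.2 g).mpr hPQg⟩

theorem conjTranspose_mul_self_eq_one_of_mul_mem_levelSet {p : MatPair n k}
    (hp : p ∈ levelSet n k) {g : Matrix (Fin k) (Fin k) ℂ} (hg : IsUnit g)
    (hpg : (p.1 * g, g⁻¹ * p.2) ∈ levelSet n k) : gᴴ * g = 1 :=
  star_mul_self_eq_one_of_star_conj_sub_inverse_conj_eq_one
    (posSemidef_self_mul_conjTranspose p.2).nonneg hp.1 hg ((mul_mem_levelSet_iff hp.2 g).mp hpg)

theorem unitaryRel_iff_glRel (a b : levelSet n k) :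
    unitaryRel n k a b ↔ glRel n k (Set.inclusion levelSet_subset_fullRankSet a)
      (Set.inclusion levelSet_subset_fullRankSet b) := by
  constructor
  · rintro ⟨u, hu, h1, h2⟩
    exact ⟨u, ⟨⟨u, uᴴ, mul_eq_one_comm.mp hu, hu⟩, rfl⟩, h1, h2⟩
  · rintro ⟨g, hg, h1, h2⟩
    refine ⟨g, conjTranspose_mul_self_eq_one_of_mul_mem_levelSet a.2 hg ?_, h1, h2⟩
    exact (congrArg₂ Prod.mk h1 h2) ▸ b.2

theorem exists_glRel_inclusion (y : fullRankSet n k) :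
    ∃ x : levelSet n k, glRel n k (Set.inclusion levelSet_subset_fullRankSet x) y := by
  obtain ⟨g, hg, hx⟩ := exists_mul_mem_levelSet y.2
  exact ⟨⟨_, hx⟩, (glRel_equivalence n k).symm ⟨g, hg, rfl, rfl⟩⟩

end LevelSet

/-- Equation (20) of the paper: `X ⊆ Y` and the inclusion `X ↪ Y` induces a bijection
`X/U(k) ≅ Y/GLₖ(ℂ)`, identifying the hyperKähler quotient `μ⁻¹(i)/U(k)` with
`T*Grₖ(ℂⁿ) = {(B,C) : rk B = k, CB = 0}/GLₖ(ℂ)`. -/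
theorem levelSet_mod_unitary_equiv_fullRank_mod_gl (n k : ℕ) :
    levelSet n k ⊆ fullRankSet n k ∧
      ∃ f : Quot (unitaryRel n k) → Quot (glRel n k),
        Function.Bijective f ∧
          ∀ (p : MatPair n k) (hX : p ∈ levelSet n k) (hY : p ∈ fullRankSet n k),
            f (Quot.mk (unitaryRel n k) ⟨p, hX⟩) = Quot.mk (glRel n k) ⟨p, hY⟩ :=
  ⟨levelSet_subset_fullRankSet, _,
    Quot.map_bijective (glRel_equivalence n k) _ unitaryRel_iff_glRel exists_glRel_inclusion,
    fun _ _ _ ↦ rfl⟩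
end
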